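/- arXiv:2301.07888 — 2 statements merged into one kernel-verified Lean document; each statement's English description precedes it below -/
import Mathlib

section
/- Let z ∈ ℂ with z ∉ [0,9] (i.e. z does not lie on the real segment [0,9]). Then for every (ξ₁,ξ₂) ∈ ℝ², the symbol σ(ξ;z) = z − 6 + 2cos ξ₁ + 2cos ξ₂ + 2cos(ξ₁ − ξ₂) is nonzero. -/
/-- The Fourier symbol `σ(ξ; z) = z − 6 + 2cos ξ₁ + 2cos ξ₂ + 2cos(ξ₁ − ξ₂)` of the
discrete Helmholtz operator `Δ_d + z` on the triangular lattice. -/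
noncomputable def helmholtzSymbol (z : ℂ) (ξ : ℝ × ℝ) : ℂ :=
  z - 6 + 2 * (Real.cos ξ.1 : ℂ) + 2 * (Real.cos ξ.2 : ℂ) + 2 * (Real.cos (ξ.1 - ξ.2) : ℂ)

theorem symbol_nonvanishing (z : ℂ) (hz : ∀ t : ℝ, t ∈ Set.Icc (0 : ℝ) 9 → z ≠ (t : ℂ)) :
    ∀ ξ : ℝ × ℝ, helmholtzSymbol z ξ ≠ 0 := by
  intro ξ h
  unfold helmholtzSymbol at h
  set a := ξ.1
  set b := ξ.2
  have key : z = ((6 - 2 * Real.cos a - 2 * Real.cos b - 2 * Real.cos (a - b) : ℝ) : ℂ) := by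
    simp only [Complex.ofReal_sub, Complex.ofReal_mul, Complex.ofReal_ofNat]
    linear_combination h
  refine hz _ ⟨?_, ?_⟩ key
  · nlinarith [Real.cos_le_one a, Real.cos_le_one b, Real.cos_le_one (a - b)]
  · nlinarith [Real.cos_sub a b, Real.sin_sq_add_cos_sq a, Real.sin_sq_add_cos_sq b,
      sq_nonneg (1 + Real.cos a + Real.cos b), sq_nonneg (Real.sin a + Real.sin b)]
end

section
/- Let z ∈ ℂ \ [0,9] and let 𝒢(x) = (1/(4π²)) ∫_{[−π,π]²} e^{i(x₁ξ₁ + x₂ξ₂)} / σ(ξ;z) dξ₁dξ₂, where σ(ξ;z) = z − 6 + 2cos ξ₁ + 2cos ξ₂ + 2cos(ξ₁−ξ₂). Then 𝒢 decays exponentially at infinity: there exist constants C > 0 and c > 0 such that |𝒢(x)| ≤ C e^{−c|x|} for all x ∈ ℤ², where |x| denotes the Euclidean norm. -/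
open MeasureTheory

/-- The lattice Green's function
`𝒢(x) = (1/(4π²)) ∫_{[−π,π]²} e^{i(x₁ξ₁ + x₂ξ₂)} / σ(ξ;z) dξ`. -/
noncomputable def latticeGreen (z : ℂ) (x : ℤ × ℤ) : ℂ :=
  (1 / (4 * (Real.pi : ℂ) ^ 2)) *
    ∫ ξ in Set.Icc ((-Real.pi, -Real.pi) : ℝ × ℝ) ((Real.pi, Real.pi) : ℝ × ℝ),
      Complex.exp (Complex.I * ((x.1 : ℂ) * (ξ.1 : ℂ) + (x.2 : ℂ) * (ξ.2 : ℂ))) /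
        helmholtzSymbol z ξ

/-- The Euclidean norm of a lattice point. -/
noncomputable def latticeNorm (x : ℤ × ℤ) : ℝ :=
  Real.sqrt ((x.1 : ℝ) ^ 2 + (x.2 : ℝ) ^ 2)

/-! The symbol extends to an entire function of each variable, `2π`-periodic in each, and it has
no zero on the real torus because `6 - 2 (cos ξ₁ + cos ξ₂ + cos (ξ₁ - ξ₂))` ranges over `[0, 9]`.
By compactness it stays bounded away from zero on a strip `|Im ξ₂| ≤ δ`. Moving the `ξ₂`-contour
to `Im ξ₂ = ±δ` (the vertical sides cancel by periodicity) multiplies `e^{i x₂ ξ₂}` by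
`e^{-δ |x₂|}`, so `|𝒢(x)| ≤ C e^{-δ |x₂|}`. The symmetry `ξ₁ ↔ ξ₂` of the symbol gives the same
bound in `|x₁|`, and `|x| ≤ 2 max (|x₁|, |x₂|)`. -/

open Set Complex
open scoped Real Interval

theorem IsCompact.exists_pos_le_norm_on_cthickening {X E : Type*} [PseudoMetricSpace X]
    [ProperSpace X] [NormedAddCommGroup E] {f : X → E} {K : Set X} (hK : IsCompact K)
    (hf : Continuous f) (h0 : ∀ x ∈ K, f x ≠ 0) :
    ∃ δ > 0, ∃ m > 0, ∀ x ∈ Metric.cthickening δ K, m ≤ ‖f x‖ := by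
  obtain ⟨δ, hδ, hsub⟩ := hK.exists_cthickening_subset_open (isOpen_ne_fun hf continuous_const) h0
  obtain ⟨m, hm, hle⟩ := (hK.cthickening (r := δ)).exists_forall_le' hf.norm.continuousOn
    fun x hx => norm_pos_iff.2 (hsub hx)
  exact ⟨δ, hδ, m, hm, hle⟩

theorem Function.Periodic.intervalIntegral_add_mul_I_eq {E : Type*} [NormedAddCommGroup E]
    [NormedSpace ℂ E] [CompleteSpace E] {f : ℂ → E} {T : ℝ} (hf : Function.Periodic f T)
    (a ε : ℝ) (hd : DifferentiableOn ℂ f ([[a, a + T]] ×ℂ [[0, ε]])) :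
    ∫ x : ℝ in a..a + T, f (x + ε * I) = ∫ x : ℝ in a..a + T, f x := by
  have h := integral_boundary_rect_eq_zero_of_differentiableOn f a ((a + T : ℝ) + ε * I)
    (by simpa using hd)
  have hside : ∀ y : ℝ, f ((a + T : ℝ) + y * I) = f (a + y * I) := fun y => by
    rw [← hf (a + y * I)]; push_cast; ring_nf
  simp only [add_re, add_im, mul_re, mul_im, I_re, I_im, ofReal_re, ofReal_im, mul_zero,
    zero_mul, mul_one, sub_zero, add_zero, zero_add, ofReal_zero, hside] at h
  rw [add_sub_cancel_right] at h
  exact (sub_eq_zero.1 h).symm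

lemma norm_exp_I_mul_intCast_mul (n : ℤ) (x ε : ℝ) :
    ‖exp (I * n * (x + ε * I))‖ = Real.exp (-(n * ε)) := by
  rw [norm_exp]
  congr 1
  simp

theorem norm_intervalIntegral_exp_mul_le_of_shift {g : ℂ → ℂ} (hg : Function.Periodic g (2 * π))
    (n : ℤ) {ε M : ℝ} (hd : DifferentiableOn ℂ g ([[-π, π]] ×ℂ [[0, ε]]))
    (hM : ∀ x ∈ Icc (-π) π, ‖g (x + ε * I)‖ ≤ M) :
    ‖∫ x : ℝ in -π..π, exp (I * n * x) * g x‖ ≤ 2 * π * M * Real.exp (-(n * ε)) := by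
  have hper : Function.Periodic (fun w => exp (I * n * w) * g w) (2 * π : ℝ) := fun w => by
    have : exp (I * n * (2 * π)) = 1 := by
      rw [← exp_int_mul_two_pi_mul_I n]; ring_nf
    simp only [ofReal_mul, ofReal_ofNat, hg w, mul_add, exp_add, this, mul_one]
  have hshift := hper.intervalIntegral_add_mul_I_eq (-π) ε (by
    rw [show -π + 2 * π = π by ring]
    exact ((differentiable_exp.comp (differentiable_id.const_mul _)).differentiableOn).mul hd)
  rw [show -π + 2 * π = π by ring] at hshift
  rw [← hshift]
  calc _ ≤ M * Real.exp (-(n * ε)) * |π - -π| := by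
        refine intervalIntegral.norm_integral_le_of_norm_le_const fun x hx => ?_
        rw [uIoc_of_le (by linarith [Real.pi_pos])] at hx
        rw [norm_mul, norm_exp_I_mul_intCast_mul, mul_comm]
        exact mul_le_mul_of_nonneg_right (hM x (Ioc_subset_Icc_self hx)) (Real.exp_nonneg _)
    _ = 2 * π * M * Real.exp (-(n * ε)) := by
        rw [abs_of_pos (by linarith [Real.pi_pos])]; ring

theorem norm_intervalIntegral_exp_mul_le {g : ℂ → ℂ} (hg : Function.Periodic g (2 * π)) (n : ℤ)
    {δ M : ℝ} (hδ : 0 ≤ δ) (hd : DifferentiableOn ℂ g (Icc (-π) π ×ℂ Icc (-δ) δ))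
    (hM : ∀ w ∈ Icc (-π) π ×ℂ Icc (-δ) δ, ‖g w‖ ≤ M) :
    ‖∫ x : ℝ in -π..π, exp (I * n * x) * g x‖ ≤ 2 * π * M * Real.exp (-δ * |(n : ℝ)|) := by
  have hshift : ∀ ε, |ε| ≤ δ →
      ‖∫ x : ℝ in -π..π, exp (I * n * x) * g x‖ ≤ 2 * π * M * Real.exp (-(n * ε)) := by
    intro ε hε
    have hsub : [[-π, π]] ×ℂ [[0, ε]] ⊆ Icc (-π) π ×ℂ Icc (-δ) δ := by
      rw [uIcc_of_le (by linarith [Real.pi_pos])]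
      exact reProdIm_subset_iff'.2 <| .inl ⟨subset_rfl,
        uIcc_subset_Icc ⟨by linarith, hδ⟩ (abs_le.1 hε)⟩
    exact norm_intervalIntegral_exp_mul_le_of_shift hg n (hd.mono hsub)
      fun x hx => hM _ (by simpa [mem_reProdIm] using ⟨hx, abs_le.1 hε⟩)
  rcases le_total 0 (n : ℝ) with hn | hn
  · simpa [abs_of_nonneg hn, mul_comm] using hshift δ (abs_of_nonneg hδ).le
  · simpa [abs_of_nonpos hn, mul_comm] using hshift (-δ) (by rw [abs_neg, abs_of_nonneg hδ])

noncomputable def complexHelmholtzSymbol (z : ℂ) (w : ℂ × ℂ) : ℂ :=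
  z - 6 + 2 * cos w.1 + 2 * cos w.2 + 2 * cos (w.1 - w.2)

lemma complexHelmholtzSymbol_ofReal (z : ℂ) (ξ : ℝ × ℝ) :
    complexHelmholtzSymbol z (ξ.1, ξ.2) = helmholtzSymbol z ξ := by
  simp [complexHelmholtzSymbol, helmholtzSymbol]

lemma continuous_complexHelmholtzSymbol (z : ℂ) : Continuous (complexHelmholtzSymbol z) := by
  unfold complexHelmholtzSymbol
  fun_prop

lemma differentiable_complexHelmholtzSymbol_snd (z w₁ : ℂ) :
    Differentiable ℂ fun w₂ => complexHelmholtzSymbol z (w₁, w₂) := by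
  unfold complexHelmholtzSymbol
  fun_prop

lemma periodic_complexHelmholtzSymbol_snd (z w₁ : ℂ) :
    Function.Periodic (fun w₂ => complexHelmholtzSymbol z (w₁, w₂)) (2 * π) := fun w₂ => by
  simp only [complexHelmholtzSymbol, cos_add_two_pi]
  rw [show w₁ - (w₂ + 2 * π) = w₁ - w₂ - 2 * π by ring, cos_sub_two_pi]

lemma helmholtzSymbol_swap (z : ℂ) (ξ : ℝ × ℝ) : helmholtzSymbol z ξ.swap = helmholtzSymbol z ξ := by
  simp only [helmholtzSymbol, Prod.fst_swap, Prod.snd_swap, ← Real.cos_neg (ξ.2 - ξ.1), neg_sub]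
  ring

-- `2 (cos a + cos b + cos (a - b)) + 3 = (cos a + cos b + 1)² + (sin a + sin b)²`
lemma neg_three_halves_le_cos_add_cos_add_cos_sub (a b : ℝ) :
    -(3 / 2) ≤ Real.cos a + Real.cos b + Real.cos (a - b) := by
  nlinarith [sq_nonneg (Real.cos a + Real.cos b + 1), sq_nonneg (Real.sin a + Real.sin b),
    Real.sin_sq_add_cos_sq a, Real.sin_sq_add_cos_sq b, Real.cos_sub a b]

lemma helmholtzSymbol_ne_zero {z : ℂ} (hz : ∀ t : ℝ, t ∈ Icc (0 : ℝ) 9 → z ≠ t) (ξ : ℝ × ℝ) :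
    helmholtzSymbol z ξ ≠ 0 := by
  set t := 6 - 2 * Real.cos ξ.1 - 2 * Real.cos ξ.2 - 2 * Real.cos (ξ.1 - ξ.2)
  have ht : t ∈ Icc (0 : ℝ) 9 := by
    have := neg_three_halves_le_cos_add_cos_add_cos_sub ξ.1 ξ.2
    constructor <;> linarith [Real.cos_le_one ξ.1, Real.cos_le_one ξ.2, Real.cos_le_one (ξ.1 - ξ.2)]
  intro h
  refine hz t ht ?_
  simp only [helmholtzSymbol, t, ofReal_sub, ofReal_mul, ofReal_ofNat] at h ⊢
  linear_combination h

lemma exists_forall_le_norm_complexHelmholtzSymbol {z : ℂ}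
    (hz : ∀ t : ℝ, t ∈ Icc (0 : ℝ) 9 → z ≠ t) :
    ∃ δ > 0, ∃ m > 0, ∀ a ∈ Icc (-π) π, ∀ w ∈ Icc (-π) π ×ℂ Icc (-δ) δ,
      m ≤ ‖complexHelmholtzSymbol z (a, w)‖ := by
  have hK : IsCompact ((fun ξ : ℝ × ℝ => ((ξ.1 : ℂ), (ξ.2 : ℂ))) '' Icc (-π) π ×ˢ Icc (-π) π) :=
    (isCompact_Icc.prod isCompact_Icc).image (by fun_prop)
  obtain ⟨δ, hδ, m, hm, hle⟩ := hK.exists_pos_le_norm_on_cthickening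
    (continuous_complexHelmholtzSymbol z) (by
      rintro _ ⟨ξ, -, rfl⟩
      rw [complexHelmholtzSymbol_ofReal]
      exact helmholtzSymbol_ne_zero hz ξ)
  refine ⟨δ, hδ, m, hm, fun a ha w hw => hle _ ?_⟩
  rw [mem_reProdIm] at hw
  refine Metric.mem_cthickening_of_dist_le _ ((a : ℂ), (w.re : ℂ)) _ _ ⟨(a, w.re), ⟨ha, hw.1⟩, rfl⟩ ?_
  rw [Prod.dist_eq, dist_self, dist_of_re_eq (by simp)]
  simpa [Real.dist_eq, abs_le] using hw.2

noncomputable def latticeGreenIntegrand (z : ℂ) (x : ℤ × ℤ) (ξ : ℝ × ℝ) : ℂ :=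
  exp (I * ((x.1 : ℂ) * (ξ.1 : ℂ) + (x.2 : ℂ) * (ξ.2 : ℂ))) / helmholtzSymbol z ξ

lemma latticeGreen_eq_setIntegral (z : ℂ) (x : ℤ × ℤ) :
    latticeGreen z x =
      1 / (4 * (π : ℂ) ^ 2) * ∫ ξ in Icc (-π) π ×ˢ Icc (-π) π, latticeGreenIntegrand z x ξ := by
  rw [latticeGreen, Icc_prod_eq]
  rfl

lemma latticeGreenIntegrand_swap (z : ℂ) (x : ℤ × ℤ) (ξ : ℝ × ℝ) :
    latticeGreenIntegrand z x.swap ξ.swap = latticeGreenIntegrand z x ξ := by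
  simp only [latticeGreenIntegrand, helmholtzSymbol_swap, Prod.fst_swap, Prod.snd_swap, add_comm]

lemma latticeGreen_swap (z : ℂ) (x : ℤ × ℤ) : latticeGreen z x.swap = latticeGreen z x := by
  simp only [latticeGreen_eq_setIntegral, Measure.volume_eq_prod]
  rw [← setIntegral_prod_swap]
  simp only [latticeGreenIntegrand_swap]

lemma continuous_latticeGreenIntegrand {z : ℂ} (hz : ∀ t : ℝ, t ∈ Icc (0 : ℝ) 9 → z ≠ t)
    (x : ℤ × ℤ) : Continuous (latticeGreenIntegrand z x) := by
  refine Continuous.div (by fun_prop) ?_ (helmholtzSymbol_ne_zero hz)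
  unfold helmholtzSymbol
  fun_prop

lemma norm_setIntegral_latticeGreenIntegrand_le {z : ℂ} {δ m : ℝ} (hδ : 0 ≤ δ) (hm : 0 < m)
    (hS : ∀ a ∈ Icc (-π) π, ∀ w ∈ Icc (-π) π ×ℂ Icc (-δ) δ,
      m ≤ ‖complexHelmholtzSymbol z (a, w)‖)
    (x : ℤ × ℤ) {a : ℝ} (ha : a ∈ Icc (-π) π) :
    ‖∫ t in Icc (-π) π, latticeGreenIntegrand z x (a, t)‖ ≤
      2 * π * m⁻¹ * Real.exp (-δ * |(x.2 : ℝ)|) := by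
  set g : ℂ → ℂ := fun w => exp (I * x.1 * a) / complexHelmholtzSymbol z (a, w)
  have hne : ∀ w ∈ Icc (-π) π ×ℂ Icc (-δ) δ, complexHelmholtzSymbol z (a, w) ≠ 0 :=
    fun w hw => norm_pos_iff.1 (hm.trans_le (hS a ha w hw))
  have heq : ∫ t in Icc (-π) π, latticeGreenIntegrand z x (a, t) =
      ∫ t : ℝ in -π..π, exp (I * x.2 * t) * g t := by
    rw [integral_Icc_eq_integral_Ioc, ← intervalIntegral.integral_of_le (by linarith [Real.pi_pos])]
    congr 1
    funext t
    simp only [latticeGreenIntegrand, g, ← complexHelmholtzSymbol_ofReal, mul_add, exp_add,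
      mul_assoc]
    ring
  rw [heq]
  refine norm_intervalIntegral_exp_mul_le (fun w => ?_) x.2 hδ ?_ fun w hw => ?_
  · simp only [g, periodic_complexHelmholtzSymbol_snd z a w]
  · exact (differentiableOn_const _).div
      (differentiable_complexHelmholtzSymbol_snd z a).differentiableOn hne
  · rw [norm_div, show ‖exp (I * x.1 * a)‖ = 1 by simp [norm_exp], one_div]
    exact inv_anti₀ hm (hS a ha w hw)

lemma norm_latticeGreen_le_snd {z : ℂ} (hz : ∀ t : ℝ, t ∈ Icc (0 : ℝ) 9 → z ≠ t) {δ m : ℝ}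
    (hδ : 0 ≤ δ) (hm : 0 < m)
    (hS : ∀ a ∈ Icc (-π) π, ∀ w ∈ Icc (-π) π ×ℂ Icc (-δ) δ,
      m ≤ ‖complexHelmholtzSymbol z (a, w)‖)
    (x : ℤ × ℤ) : ‖latticeGreen z x‖ ≤ m⁻¹ * Real.exp (-δ * |(x.2 : ℝ)|) := by
  have hint : IntegrableOn (latticeGreenIntegrand z x) (Icc (-π) π ×ˢ Icc (-π) π)
      (volume.prod volume) :=
    (continuous_latticeGreenIntegrand hz x).continuousOn.integrableOn_compact
      (isCompact_Icc.prod isCompact_Icc)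
  rw [latticeGreen_eq_setIntegral, Measure.volume_eq_prod, setIntegral_prod _ hint, norm_mul]
  calc _ ≤ ‖1 / (4 * (π : ℂ) ^ 2)‖ * (2 * π * m⁻¹ * Real.exp (-δ * |(x.2 : ℝ)|) *
        volume.real (Icc (-π) π)) := by
        gcongr
        exact norm_setIntegral_le_of_norm_le_const measure_Icc_lt_top
          fun a ha => norm_setIntegral_latticeGreenIntegrand_le hδ hm hS x ha
    _ = m⁻¹ * Real.exp (-δ * |(x.2 : ℝ)|) := by
        rw [Real.volume_real_Icc_of_le (by linarith [Real.pi_pos])]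
        norm_num [abs_of_pos Real.pi_pos]
        field_simp
        ring

lemma latticeNorm_le_abs_add_abs (x : ℤ × ℤ) : latticeNorm x ≤ |(x.1 : ℝ)| + |(x.2 : ℝ)| := by
  rw [latticeNorm, Real.sqrt_le_left (by positivity)]
  nlinarith [sq_abs (x.1 : ℝ), sq_abs (x.2 : ℝ), abs_nonneg (x.1 : ℝ), abs_nonneg (x.2 : ℝ)]

theorem latticeGreen_exponential_decay (z : ℂ)
    (hz : ∀ t : ℝ, t ∈ Set.Icc (0 : ℝ) 9 → z ≠ (t : ℂ)) :
    ∃ C > (0 : ℝ), ∃ c > (0 : ℝ), ∀ x : ℤ × ℤ,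
      ‖latticeGreen z x‖ ≤ C * Real.exp (-c * latticeNorm x) := by
  obtain ⟨δ, hδ, m, hm, hS⟩ := exists_forall_le_norm_complexHelmholtzSymbol hz
  have hsnd := norm_latticeGreen_le_snd hz hδ.le hm hS
  refine ⟨m⁻¹, inv_pos.2 hm, δ / 2, half_pos hδ, fun x => ?_⟩
  have hx := latticeNorm_le_abs_add_abs x
  have hexp : ∀ k : ℤ, latticeNorm x ≤ 2 * |(k : ℝ)| →
      m⁻¹ * Real.exp (-δ * |(k : ℝ)|) ≤ m⁻¹ * Real.exp (-(δ / 2) * latticeNorm x) := fun k hk =>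
    mul_le_mul_of_nonneg_left (Real.exp_le_exp.2 (by nlinarith)) (inv_nonneg.2 hm.le)
  rcases le_total |(x.1 : ℝ)| |(x.2 : ℝ)| with h | h
  · exact (hsnd x).trans (hexp x.2 (by linarith))
  · rw [← latticeGreen_swap]
    exact (hsnd x.swap).trans (hexp x.1 (by linarith))
end
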